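/- arXiv:1102.4326 — 2 statements merged into one kernel-verified Lean document; each statement's English description precedes it below -/
import Mathlib

section
/- For every environment model m and behavior b = [q₀, a₁, q₁, …, a_n, q_n]: if strg(b) ∩ opt*(m) is nonempty, then (1) ⟨q_i, a_{i+1}⟩ ∉ U_m for all 0 ≤ i < n, and (2) strg(b) ∩ opt(m) is nonempty. -/
open scoped BigOperators

/-- A Markov decision process over finite state space `Q` and finite action space `A`:
transition probabilities `t`, reward function `r`, and discount factor `0 < γ < 1`. -/
structure MDP (Q A : Type*) [Fintype Q] [Fintype A] where
  /-- transition probabilities: `t q a` is a distribution over next states -/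
  t : Q → A → Q → ℝ
  t_nonneg : ∀ q a q', 0 ≤ t q a q'
  t_sum : ∀ q a, (∑ q', t q a q') = 1
  /-- reward function -/
  r : Q → A → ℝ
  /-- discount factor -/
  γ : ℝ
  γ_pos : 0 < γ
  γ_lt_one : γ < 1

/-- An environment model: an MDP with a distinguished "nothing" action `N`
labelling a zero-reward self-loop at every state. -/
structure EnvModel (Q A : Type*) [Fintype Q] [Fintype A] extends MDP Q A where
  /-- the distinguished "nothing" action -/
  N : A
  t_N : ∀ q, t q N q = 1
  r_N : ∀ q, r q N = 0

variable {Q A : Type*} [Fintype Q] [DecidableEq Q] [Fintype A] [DecidableEq A]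

/-- `stepDist m σ i q q'`: the probability of being at state `q'` after `i` steps of
following the strategy `σ` from state `q`. -/
noncomputable def stepDist (m : MDP Q A) (σ : Q → A) : ℕ → Q → Q → ℝ
  | 0 => fun q q' => if q = q' then 1 else 0
  | i + 1 => fun q q' => ∑ q'', stepDist m σ i q q'' * m.t q'' (σ q'') q'

/-- `V m σ q`: the expected total discounted reward of following strategy `σ` from
state `q`; it is the unique bounded solution of the Bellman equation
`V m σ q = r q (σ q) + γ * ∑ q', t q (σ q) q' * V m σ q'`. -/
noncomputable def V (m : MDP Q A) (σ : Q → A) (q : Q) : ℝ :=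
  ∑' i : ℕ, m.γ ^ i * ∑ q', stepDist m σ i q q' * m.r q' (σ q')

/-- `V*_m(q) = max_σ V_m(σ,q)`. -/
noncomputable def Vstar (m : MDP Q A) (q : Q) : ℝ := ⨆ σ : Q → A, V m σ q

/-- the set of optimal strategies -/
def opt (m : MDP Q A) : Set (Q → A) := {σ | ∀ q, V m σ q = Vstar m q}

/-- `Q_m(σ,q,a) = r(q,a) + γ * ∑_{q'} t(q,a)(q') * V_m(σ,q')`. -/
noncomputable def Qval (m : MDP Q A) (σ : Q → A) (q : Q) (a : A) : ℝ :=
  m.r q a + m.γ * ∑ q', m.t q a q' * V m σ q'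

/-- `Q*_m(q,a) = r(q,a) + γ * ∑_{q'} t(q,a)(q') * V*_m(q')`. -/
noncomputable def Qstar (m : MDP Q A) (q : Q) (a : A) : ℝ :=
  m.r q a + m.γ * ∑ q', m.t q a q' * Vstar m q'

/-- The set `U_m` of useless state-action pairs. -/
def Uset (m : EnvModel Q A) : Set (Q × A) :=
  {p | p.2 ≠ m.N ∧ ∀ σ : Q → A, Qval m.toMDP σ p.1 p.2 ≤ 0}

open Classical in
/-- `U(σ)`: replace `σ`'s action by the nothing action `N` at exactly those states `q`
with `⟨q, σ q⟩ ∈ U`. -/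
noncomputable def applyU (m : EnvModel Q A) (U : Set (Q × A)) (σ : Q → A) : Q → A :=
  fun q => if (q, σ q) ∈ U then m.N else σ q

/-- A contingency `κ` is consistent with `m` when it only picks states of positive
transition probability. -/
def Consistent (m : MDP Q A) (κ : Q → A → ℕ → Q) : Prop :=
  ∀ q a i, 0 < m.t q a (κ q a i)

/-- One step of the execution determined by `σ` and `κ`: the current state together
with the occurrence counts of each state-action pair so far. -/
def execStep (σ : Q → A) (κ : Q → A → ℕ → Q) :
    Q × (Q × A → ℕ) → Q × (Q × A → ℕ) :=
  fun s =>
    (κ s.1 (σ s.1) (s.2 (s.1, σ s.1)),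
     fun p => if p = (s.1, σ s.1) then s.2 p + 1 else s.2 p)

/-- the `i`-th state of the execution `m(q,κ,σ)` -/
def execState (σ : Q → A) (κ : Q → A → ℕ → Q) (q : Q) (i : ℕ) : Q :=
  ((execStep σ κ)^[i] (q, fun _ => 0)).1

/-- the execution `m(q,κ,σ) = [q₀, a₁, q₁, a₂, …]`, as the sequence of pairs
`i ↦ (q_i, a_{i+1})` (so `a_{i+1} = σ q_i`). -/
def execOf (σ : Q → A) (κ : Q → A → ℕ → Q) (q : Q) (i : ℕ) : Q × A :=
  (execState σ κ q i, σ (execState σ κ q i))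

/-- the execution flattened into the alternating sequence `[q₀, a₁, q₁, a₂, …]`
(position `2i` holds `q_i`, position `2i+1` holds `a_{i+1}`). -/
def flatExec (e : ℕ → Q × A) (j : ℕ) : Q ⊕ A :=
  if j % 2 = 0 then Sum.inl (e (j / 2)).1 else Sum.inr (e (j / 2)).2

open Classical in
/-- `active(e)`: the prefix of the alternating sequence of `e` strictly before the
first occurrence of the nothing action `N` (all of it if `N` never occurs);
positions past the cut-off are `none`. -/
noncomputable def activeSeq (N : A) (e : ℕ → Q × A) (j : ℕ) : Option (Q ⊕ A) :=
  if ∃ i, 2 * i + 1 ≤ j ∧ (e i).2 = N then none else some (flatExec e j)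

/-- `f` is a subsequence of `g` (for possibly-cut-off sequences). -/
def OptSubseq {X : Type*} (f g : ℕ → Option X) : Prop :=
  ∃ φ : ℕ → ℕ, StrictMono φ ∧ ∀ j, f j ≠ none → f j = g (φ j)

/-- `e₁` is a proper sub-execution of `e₂`: `active(e₁)` is a proper subsequence
of `active(e₂)`. -/
def ProperSubexec (N : A) (e₁ e₂ : ℕ → Q × A) : Prop :=
  OptSubseq (activeSeq N e₁) (activeSeq N e₂) ∧ activeSeq N e₁ ≠ activeSeq N e₂

/-- `σ' ≺ σ`: for every consistent contingency `κ` and state `q`, `m(q,κ,σ')` is a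
proper sub-execution of or equal to `m(q,κ,σ)`, and for at least one consistent
contingency and state it is a proper sub-execution. -/
def prec (m : EnvModel Q A) (σ' σ : Q → A) : Prop :=
  (∀ κ, Consistent m.toMDP κ → ∀ q,
      ProperSubexec m.N (execOf σ' κ q) (execOf σ κ q) ∨ execOf σ' κ q = execOf σ κ q) ∧
  (∃ κ q, Consistent m.toMDP κ ∧ ProperSubexec m.N (execOf σ' κ q) (execOf σ κ q))

/-- `opt*(m)`: optimal strategies that are non-redundant. -/
def optStar (m : EnvModel Q A) : Set (Q → A) :=
  {σ | σ ∈ opt m.toMDP ∧ ¬∃ σ' ∈ opt m.toMDP, prec m σ' σ}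

/-- A behavior `[q₀, a₁, q₁, …, a_n, q_n]`: the list of pairs `(q_i, a_{i+1})`
for `0 ≤ i < n` together with the final state `q_n`. -/
structure Behavior (Q A : Type*) where
  steps : List (Q × A)
  last : Q

/-- `strg(b)`: the strategies that could have produced the behavior `b`. -/
def strg (b : Behavior Q A) : Set (Q → A) :=
  {σ | ∀ p ∈ b.steps, σ p.1 = p.2}

/-- the behavior flattened into the alternating list `[q₀, a₁, q₁, …, a_n, q_n]` -/
def flatBehavior (b : Behavior Q A) : List (Q ⊕ A) :=
  (b.steps.flatMap fun p => [Sum.inl p.1, Sum.inr p.2]) ++ [Sum.inl b.last]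

/-- the behavior `b` is a subsequence of the execution `e` -/
def BehvSubseq (b : Behavior Q A) (e : ℕ → Q × A) : Prop :=
  ∃ φ : ℕ → ℕ, StrictMono φ ∧
    ∀ j (h : j < (flatBehavior b).length),
      (flatBehavior b).get ⟨j, h⟩ = flatExec e (φ j)

/-- `behv*(m)`: behaviors exhibited by some non-redundant optimal strategy under some
consistent contingency from some state. -/
def behvStar (m : EnvModel Q A) : Set (Behavior Q A) :=
  {b | ∃ σ ∈ optStar m, ∃ κ q, Consistent m.toMDP κ ∧ BehvSubseq b (execOf σ κ q)}

/-- the state `q_{i+1}` following the `i`-th step of the behavior `b` -/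
def nextStateOf (b : Behavior Q A) (i : ℕ) : Q :=
  if h : i + 1 < b.steps.length then (b.steps.get ⟨i + 1, h⟩).1 else b.last

/-- `b` could actually be observed: `t(q_i, a_{i+1})(q_{i+1}) > 0` for all `0 ≤ i < n`. -/
def Observable (m : MDP Q A) (b : Behavior Q A) : Prop :=
  ∀ i (h : i < b.steps.length),
    0 < m.t (b.steps.get ⟨i, h⟩).1 (b.steps.get ⟨i, h⟩).2 (nextStateOf b i)

/-- `r* = max_{q,a} |r(q,a)|` -/
noncomputable def rstar (m : MDP Q A) : ℝ := ⨆ p : Q × A, |m.r p.1 p.2|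

/-- the reward function of `fix(m,b)`, defined recursively along the behavior -/
noncomputable def fixR (ω : ℝ) : (Q → A → ℝ) → List (Q × A) → Q → A → ℝ
  | r, [] => r
  | r, s :: rest => fixR ω (fun q a => if q = s.1 ∧ a ≠ s.2 then -ω else r q a) rest

/-- `fix(m,b)`: the MDP `m` with its reward function modified so that deviating from
the actions of `b` at the states of `b` incurs the penalty `-ω`. -/
noncomputable def fixMDP (m : MDP Q A) (ω : ℝ) (b : Behavior Q A) : MDP Q A :=
  { m with r := fixR ω m.r b.steps }

set_option linter.unusedSectionVars false
section ValueLemmas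

variable (m : MDP Q A) (σ : Q → A)

lemma stepDist_nonneg : ∀ (i : ℕ) (q q' : Q), 0 ≤ stepDist m σ i q q'
  | 0, q, q' => by simp only [stepDist]; split <;> norm_num
  | (i+1), q, q' => Finset.sum_nonneg fun q'' _ =>
      mul_nonneg (stepDist_nonneg i q q'') (m.t_nonneg _ _ _)

lemma stepDist_sum : ∀ (i : ℕ) (q : Q), ∑ q', stepDist m σ i q q' = 1
  | 0, q => by simp [stepDist]
  | (i+1), q => by
    simp only [stepDist]
    rw [Finset.sum_comm]
    simp_rw [← Finset.mul_sum, m.t_sum, mul_one]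
    exact stepDist_sum i q

lemma stepDist_le_one (i : ℕ) (q q' : Q) : stepDist m σ i q q' ≤ 1 := by
  have h := stepDist_sum m σ i q
  calc stepDist m σ i q q' ≤ ∑ x, stepDist m σ i q x :=
        Finset.single_le_sum (fun x _ => stepDist_nonneg m σ i q x) (Finset.mem_univ q')
    _ = 1 := h

lemma summable_V (q : Q) :
    Summable fun i : ℕ => m.γ ^ i * ∑ q', stepDist m σ i q q' * m.r q' (σ q') := by
  apply Summable.of_norm_bounded (g := fun i => m.γ ^ i * ∑ q', |m.r q' (σ q')|)
  · exact (summable_geometric_of_lt_one m.γ_pos.le m.γ_lt_one).mul_right _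
  · intro i
    rw [Real.norm_eq_abs, abs_mul, abs_pow, abs_of_pos m.γ_pos]
    refine mul_le_mul_of_nonneg_left ?_ (pow_nonneg m.γ_pos.le i)
    calc |∑ q', stepDist m σ i q q' * m.r q' (σ q')|
        ≤ ∑ q', |stepDist m σ i q q' * m.r q' (σ q')| := Finset.abs_sum_le_sum_abs _ _
      _ ≤ ∑ q', |m.r q' (σ q')| := Finset.sum_le_sum fun q' _ => by
          rw [abs_mul, abs_of_nonneg (stepDist_nonneg m σ i q q')]
          exact mul_le_of_le_one_left (abs_nonneg _) (stepDist_le_one m σ i q q')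

lemma stepDist_succ' : ∀ (i : ℕ) (q q' : Q),
    stepDist m σ (i+1) q q' = ∑ q'', m.t q (σ q) q'' * stepDist m σ i q'' q'
  | 0, q, q' => by simp [stepDist]
  | (i+1), q, q' => by
    show ∑ x, stepDist m σ (i+1) q x * m.t x (σ x) q' = _
    have h : ∀ x, stepDist m σ (i+1) q x = ∑ y, m.t q (σ q) y * stepDist m σ i y x :=
      fun x => stepDist_succ' i q x
    simp_rw [h, Finset.sum_mul, mul_assoc]
    rw [Finset.sum_comm]
    congr 1; funext y
    rw [← Finset.mul_sum]
    simp only [stepDist]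

lemma V_bellman (q : Q) :
    V m σ q = m.r q (σ q) + m.γ * ∑ q', m.t q (σ q) q' * V m σ q' := by
  rw [V, Summable.tsum_eq_zero_add (summable_V m σ q)]
  congr 1
  · simp [stepDist, Finset.sum_ite_eq]
  · have h1 : ∀ i : ℕ, m.γ ^ (i+1) * ∑ q', stepDist m σ (i+1) q q' * m.r q' (σ q')
        = ∑ q', m.t q (σ q) q' * (m.γ * (m.γ ^ i * ∑ x, stepDist m σ i q' x * m.r x (σ x))) := by
      intro i
      simp_rw [stepDist_succ' m σ i q, Finset.sum_mul, mul_assoc]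
      rw [Finset.sum_comm, Finset.mul_sum]
      congr 1; funext q''
      rw [← Finset.mul_sum, Finset.mul_sum]
      ring_nf
      simp_rw [Finset.mul_sum]
      congr 1; funext x; ring
    simp_rw [h1]
    rw [Summable.tsum_finsetSum fun q' _ => (((summable_V m σ q').mul_left m.γ).mul_left (m.t q (σ q) q'))]
    rw [Finset.mul_sum]
    congr 1; funext q'
    rw [tsum_mul_left, tsum_mul_left]
    show m.t q (σ q) q' * (m.γ * V m σ q') = m.γ * (m.t q (σ q) q' * V m σ q')
    ring

end ValueLemmas
section OptLemmas
set_option linter.unusedSectionVars false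

lemma t_N_zero (m : EnvModel Q A) (q x : Q) (h : x ≠ q) : m.t q m.N x = 0 := by
  have hsum := m.t_sum q m.N
  have h1 : ∑ q' ∈ Finset.univ.erase q, m.t q m.N q' = 0 := by
    have := Finset.add_sum_erase Finset.univ (m.t q m.N) (Finset.mem_univ q)
    rw [m.t_N q] at this
    linarith [hsum, this]
  have := (Finset.sum_eq_zero_iff_of_nonneg (fun q' _ => m.t_nonneg q m.N q')).mp h1
  exact this x (Finset.mem_erase.mpr ⟨h, Finset.mem_univ x⟩)

lemma V_nothing (m : EnvModel Q A) (q : Q) : V m.toMDP (fun _ => m.N) q = 0 := by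
  simp [V, m.r_N]

lemma bddAbove_V (m : MDP Q A) (q : Q) : BddAbove (Set.range fun σ : Q → A => V m σ q) :=
  (Set.finite_range _).bddAbove

lemma Vstar_nonneg (m : EnvModel Q A) (q : Q) : 0 ≤ Vstar m.toMDP q := by
  rw [← V_nothing m q]
  exact le_ciSup (bddAbove_V m.toMDP q) (fun _ => m.N)

lemma bellman_unique (m : MDP Q A) (q0 : Q) (c : Q → ℝ) (τ : Q → A) (f g : Q → ℝ)
    (hf0 : f q0 = g q0)
    (hf : ∀ q, q ≠ q0 → f q = c q + m.γ * ∑ q', m.t q (τ q) q' * f q')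
    (hg : ∀ q, q ≠ q0 → g q = c q + m.γ * ∑ q', m.t q (τ q) q' * g q') :
    f = g := by
  have hne : (Finset.univ : Finset Q).Nonempty := ⟨q0, Finset.mem_univ q0⟩
  obtain ⟨qm, -, hqm⟩ := Finset.exists_max_image Finset.univ (fun q => |f q - g q|) hne
  have hkey : ∀ q, |f q - g q| ≤ |f qm - g qm| := fun q => hqm q (Finset.mem_univ q)
  have hmz : |f qm - g qm| ≤ 0 := by
    by_cases hq : qm = q0
    · rw [hq, hf0]; simp
    · have hsplit : ∑ q', m.t qm (τ qm) q' * (f q' - g q')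
          = (∑ q', m.t qm (τ qm) q' * f q') - ∑ q', m.t qm (τ qm) q' * g q' := by
        rw [← Finset.sum_sub_distrib]
        exact Finset.sum_congr rfl fun q' _ => mul_sub _ _ _
      have h1 : f qm - g qm = m.γ * ∑ q', m.t qm (τ qm) q' * (f q' - g q') := by
        rw [hf qm hq, hg qm hq, hsplit]
        ring
      have h2 : |f qm - g qm| ≤ m.γ * |f qm - g qm| := by
        conv_lhs => rw [h1]
        rw [abs_mul, abs_of_pos m.γ_pos]
        refine mul_le_mul_of_nonneg_left ?_ m.γ_pos.le
        calc |∑ q', m.t qm (τ qm) q' * (f q' - g q')|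
            ≤ ∑ q', |m.t qm (τ qm) q' * (f q' - g q')| := Finset.abs_sum_le_sum_abs _ _
          _ ≤ ∑ q', m.t qm (τ qm) q' * |f qm - g qm| := Finset.sum_le_sum fun q' _ => by
              rw [abs_mul, abs_of_nonneg (m.t_nonneg _ _ _)]
              exact mul_le_mul_of_nonneg_left (hkey q') (m.t_nonneg _ _ _)
          _ = |f qm - g qm| := by rw [← Finset.sum_mul, m.t_sum, one_mul]
      nlinarith [abs_nonneg (f qm - g qm), m.γ_lt_one]
  funext q
  have := le_antisymm (le_trans (hkey q) hmz) (abs_nonneg _)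
  have := abs_eq_zero.mp this
  linarith

lemma V_self_N (m : EnvModel Q A) (σ : Q → A) (q : Q) (h : σ q = m.N) :
    V m.toMDP σ q = 0 := by
  have hb := V_bellman m.toMDP σ q
  rw [h, m.r_N] at hb
  have hsum : ∑ q', m.t q m.N q' * V m.toMDP σ q' = V m.toMDP σ q := by
    rw [Finset.sum_eq_single q]
    · rw [m.t_N, one_mul]
    · intro x _ hx; rw [t_N_zero m q x hx, zero_mul]
    · intro hx; exact absurd (Finset.mem_univ q) hx
  rw [hsum, zero_add] at hb
  have := m.γ_lt_one
  nlinarith [hb]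

lemma opt_update (m : EnvModel Q A) (σ : Q → A) (hσ : σ ∈ opt m.toMDP) (q : Q)
    (hU : (q, σ q) ∈ Uset m) :
    Function.update σ q m.N ∈ opt m.toMDP ∧
      V m.toMDP (Function.update σ q m.N) = V m.toMDP σ := by
  set σ' := Function.update σ q m.N with hσ'
  have hVq : V m.toMDP σ q = 0 := by
    have h1 : V m.toMDP σ q ≤ 0 := by
      have := hU.2 σ
      rw [Qval] at this
      rw [V_bellman m.toMDP σ q]
      exact this
    have h2 : 0 ≤ V m.toMDP σ q := by rw [hσ q]; exact Vstar_nonneg m q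
    linarith
  have hV'q : V m.toMDP σ' q = 0 := V_self_N m σ' q (Function.update_self q m.N σ)
  have hVeq : V m.toMDP σ = V m.toMDP σ' := by
    apply bellman_unique m.toMDP q (fun q'' => m.r q'' (σ q'')) σ
    · rw [hVq, hV'q]
    · intro q'' _; exact V_bellman m.toMDP σ q''
    · intro q'' hq''
      have hb := V_bellman m.toMDP σ' q''
      have hupd : σ' q'' = σ q'' := Function.update_of_ne hq'' m.N σ
      rw [hupd] at hb
      exact hb
  refine ⟨fun q'' => ?_, hVeq.symm⟩
  rw [← hVeq]; exact hσ q''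

end OptLemmas
section ExecLemmas
set_option linter.unusedSectionVars false
set_option maxHeartbeats 1000000

lemma kappa_N (m : EnvModel Q A) (κ : Q → A → ℕ → Q) (hκ : Consistent m.toMDP κ)
    (q : Q) (i : ℕ) : κ q m.N i = q := by
  by_contra hc
  have := hκ q m.N i
  rw [t_N_zero m q _ hc] at this
  exact lt_irrefl 0 this

lemma execStep_fst (σ : Q → A) (κ : Q → A → ℕ → Q) (p : Q × (Q × A → ℕ)) :
    (execStep σ κ p).1 = κ p.1 (σ p.1) (p.2 (p.1, σ p.1)) := rfl

lemma execState_freeze (m : EnvModel Q A) (σ : Q → A) (κ : Q → A → ℕ → Q)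
    (hκ : Consistent m.toMDP κ) (q0 : Q) (i : ℕ)
    (h : σ (execState σ κ q0 i) = m.N) :
    ∀ k, execState σ κ q0 (i + k) = execState σ κ q0 i := by
  intro k
  induction k with
  | zero => rfl
  | succ k ih =>
    have e : execState σ κ q0 (i + (k+1)) =
        (execStep σ κ ((execStep σ κ)^[i+k] (q0, fun _ => 0))).1 := by
      show ((execStep σ κ)^[(i+k)+1] (q0, fun _ => 0)).1 = _
      rw [Function.iterate_succ_apply']
    rw [e, execStep_fst]
    have h1 : ((execStep σ κ)^[i+k] (q0, fun _ => 0)).1 = execState σ κ q0 (i + k) := rfl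
    rw [h1, ih, h]
    exact kappa_N m κ hκ _ _

lemma execStep_congr (σ' σ : Q → A) (κ : Q → A → ℕ → Q) (p : Q × (Q × A → ℕ))
    (h : σ' p.1 = σ p.1) : execStep σ' κ p = execStep σ κ p := by
  unfold execStep
  rw [h]

lemma iterate_agree (m : EnvModel Q A) (σ : Q → A) (q : Q) (κ : Q → A → ℕ → Q) (q0 : Q) :
    ∀ j, (∀ k, k < j → execState σ κ q0 k ≠ q) →
      (execStep (Function.update σ q m.N) κ)^[j] (q0, fun _ => 0) =
      (execStep σ κ)^[j] (q0, fun _ => 0) := by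
  intro j
  induction j with
  | zero => intro _; rfl
  | succ j ih =>
    intro h
    rw [Function.iterate_succ_apply', Function.iterate_succ_apply',
      ih (fun k hk => h k (Nat.lt_succ_of_lt hk))]
    have hp : ((execStep σ κ)^[j] (q0, fun _ => 0)).1 ≠ q := h j (Nat.lt_succ_self j)
    have hupd : Function.update σ q m.N (((execStep σ κ)^[j] (q0, fun _ => 0)).1)
        = σ (((execStep σ κ)^[j] (q0, fun _ => 0)).1) := Function.update_of_ne hp _ _
    exact execStep_congr (Function.update σ q m.N) σ κ _ hupd

lemma prec_cases (m : EnvModel Q A) (σ : Q → A) (q : Q) (haN : σ q ≠ m.N)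
    (κ : Q → A → ℕ → Q) (hκ : Consistent m.toMDP κ) (q0 : Q) :
    ProperSubexec m.N (execOf (Function.update σ q m.N) κ q0) (execOf σ κ q0) ∨
      execOf (Function.update σ q m.N) κ q0 = execOf σ κ q0 := by
  set σ' := Function.update σ q m.N with hσ'def
  by_cases hB : ∃ j, execState σ κ q0 j = q
  case neg =>
    right
    push_neg at hB
    funext j
    have hst : execState σ' κ q0 j = execState σ κ q0 j :=
      congrArg Prod.fst (iterate_agree m σ q κ q0 j (fun k _ => hB k))
    show (execState σ' κ q0 j, σ' (execState σ' κ q0 j)) = (execState σ κ q0 j, σ (execState σ κ q0 j))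
    rw [hst, hσ'def, Function.update_of_ne (hB j)]
  case pos =>
    set i := Nat.find hB with hidef
    have hiq : execState σ κ q0 i = q := Nat.find_spec hB
    have hmin : ∀ k, k < i → execState σ κ q0 k ≠ q := fun k hk => Nat.find_min hB hk
    have hstle : ∀ k, k ≤ i → execState σ' κ q0 k = execState σ κ q0 k := fun k hk =>
      congrArg Prod.fst (iterate_agree m σ q κ q0 k (fun l hl => hmin l (lt_of_lt_of_le hl hk)))
    by_cases hB1 : ∃ k, k < i ∧ σ (execState σ κ q0 k) = m.N
    case pos =>
      right
      obtain ⟨k0, hk0i, hk0N⟩ := hB1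
      have hs' : execState σ' κ q0 k0 = execState σ κ q0 k0 := hstle k0 hk0i.le
      have hσ'N : σ' (execState σ' κ q0 k0) = m.N := by
        rw [hs', hσ'def, Function.update_of_ne (hmin k0 hk0i)]; exact hk0N
      funext j
      show (execState σ' κ q0 j, σ' (execState σ' κ q0 j)) = (execState σ κ q0 j, σ (execState σ κ q0 j))
      rcases le_or_gt j k0 with hj | hj
      · have h1 := hstle j (hj.trans hk0i.le)
        rw [h1, hσ'def, Function.update_of_ne (hmin j (lt_of_le_of_lt hj hk0i))]
      · have e2 : execState σ κ q0 j = execState σ κ q0 k0 := by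
          have := execState_freeze m σ κ hκ q0 k0 hk0N (j - k0)
          rwa [Nat.add_sub_cancel' hj.le] at this
        have e1 : execState σ' κ q0 j = execState σ' κ q0 k0 := by
          have := execState_freeze m σ' κ hκ q0 k0 hσ'N (j - k0)
          rwa [Nat.add_sub_cancel' hj.le] at this
        rw [e1, e2, hs', hσ'def, Function.update_of_ne (hmin k0 hk0i)]
    case neg =>
      left
      push_neg at hB1
      have hs'i : execState σ' κ q0 i = q := (hstle i le_rfl).trans hiq
      have hσ'q : σ' q = m.N := by rw [hσ'def]; exact Function.update_self q m.N σ
      have hfr : ∀ j, i ≤ j → execState σ' κ q0 j = q := by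
        intro j hj
        have hN : σ' (execState σ' κ q0 i) = m.N := by rw [hs'i]; exact hσ'q
        have := execState_freeze m σ' κ hκ q0 i hN (j - i)
        rw [Nat.add_sub_cancel' hj] at this
        rw [this, hs'i]
      have hpair : ∀ k, k < i → execOf σ' κ q0 k = execOf σ κ q0 k := by
        intro k hk
        show (execState σ' κ q0 k, σ' (execState σ' κ q0 k)) = (execState σ κ q0 k, σ (execState σ κ q0 k))
        rw [hstle k hk.le, hσ'def, Function.update_of_ne (hmin k hk)]
      have hact1N : ∀ k, i ≤ k → (execOf σ' κ q0 k).2 = m.N := by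
        intro k hk
        show σ' (execState σ' κ q0 k) = m.N
        rw [hfr k hk]; exact hσ'q
      have hact1ne : ∀ k, k < i → (execOf σ' κ q0 k).2 ≠ m.N := by
        intro k hk
        rw [hpair k hk]
        show σ (execState σ κ q0 k) ≠ m.N
        exact hB1 k hk
      have hact2ne : ∀ k, k ≤ i → (execOf σ κ q0 k).2 ≠ m.N := by
        intro k hk
        rcases lt_or_eq_of_le hk with hk' | hk'
        · exact hB1 k hk'
        · show σ (execState σ κ q0 k) ≠ m.N
          rw [hk', hiq]; exact haN
      have hfst : ∀ k, k ≤ i → (execOf σ' κ q0 k).1 = (execOf σ κ q0 k).1 := fun k hk => hstle k hk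
      have hA1some : ∀ j, j ≤ 2*i → activeSeq m.N (execOf σ' κ q0) j = some (flatExec (execOf σ' κ q0) j) := by
        intro j hj
        rw [activeSeq, if_neg]
        rintro ⟨k, hk1, hk2⟩
        rcases lt_or_ge k i with hk | hk
        · exact hact1ne k hk hk2
        · omega
      have hA1none : ∀ j, 2*i+1 ≤ j → activeSeq m.N (execOf σ' κ q0) j = none := by
        intro j hj
        rw [activeSeq, if_pos]
        exact ⟨i, hj, hact1N i le_rfl⟩
      have hA2some : ∀ j, j ≤ 2*i+1 → activeSeq m.N (execOf σ κ q0) j = some (flatExec (execOf σ κ q0) j) := by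
        intro j hj
        rw [activeSeq, if_neg]
        rintro ⟨k, hk1, hk2⟩
        exact hact2ne k (by omega) hk2
      have hflat : ∀ j, j ≤ 2*i → flatExec (execOf σ' κ q0) j = flatExec (execOf σ κ q0) j := by
        intro j hj
        rw [flatExec, flatExec]
        by_cases hpar : j % 2 = 0
        · rw [if_pos hpar, if_pos hpar, hfst (j/2) (by omega)]
        · rw [if_neg hpar, if_neg hpar]
          have hj2 : j / 2 < i := by omega
          rw [hpair (j/2) hj2]
      constructor
      · refine ⟨id, strictMono_id, fun j hne => ?_⟩
        simp only [id_eq]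
        have hj : j ≤ 2*i := by
          by_contra hc
          exact hne (hA1none j (by omega))
        rw [hA1some j hj, hA2some j (by omega), hflat j hj]
      · intro heq
        have := congrFun heq (2*i+1)
        rw [hA1none _ le_rfl, hA2some _ le_rfl] at this
        exact Option.some_ne_none _ this.symm

lemma prec_of_useless (m : EnvModel Q A) (σ : Q → A) (q : Q) (haN : σ q ≠ m.N) :
    prec m (Function.update σ q m.N) σ := by
  have hex : ∀ (q' : Q) (a' : A), ∃ x, 0 < m.t q' a' x := by
    intro q' a'
    by_contra hc
    push_neg at hc
    have hz : ∑ x, m.t q' a' x = 0 :=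
      Finset.sum_eq_zero fun x _ => le_antisymm (hc x) (m.t_nonneg q' a' x)
    rw [m.t_sum] at hz
    norm_num at hz
  refine ⟨fun κ hκ q0 => prec_cases m σ q haN κ hκ q0, ?_⟩
  set κ0 : Q → A → ℕ → Q := fun q' a' _ => Classical.choose (hex q' a') with hκ0def
  have hκ0 : Consistent m.toMDP κ0 := fun q' a' i => Classical.choose_spec (hex q' a')
  refine ⟨κ0, q, hκ0, ?_⟩
  rcases prec_cases m σ q haN κ0 hκ0 q with hgood | hbad
  · exact hgood
  · exfalso
    have h0 := congrFun hbad 0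
    have h1 : (execOf (Function.update σ q m.N) κ0 q 0).2 = m.N := by
      show Function.update σ q m.N (execState (Function.update σ q m.N) κ0 q 0) = m.N
      show Function.update σ q m.N q = m.N
      exact Function.update_self q m.N σ
    rw [h0] at h1
    exact haN h1

end ExecLemmas
/-- If `strg(b) ∩ opt*(m)` is nonempty, then (1) no step of `b` is in
`U_m` and (2) `strg(b) ∩ opt(m)` is nonempty. -/
theorem no_useless_and_strg_inter_opt_nonempty_of_strg_inter_optStar_nonempty
    {Q A : Type*} [Fintype Q] [DecidableEq Q] [Fintype A] [DecidableEq A]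
    (m : EnvModel Q A) (b : Behavior Q A)
    (h : (strg b ∩ optStar m).Nonempty) :
    (∀ p ∈ b.steps, p ∉ Uset m) ∧ (strg b ∩ opt m.toMDP).Nonempty := by
  obtain ⟨σ, hσb, hσopt⟩ := h
  constructor
  · intro p hp hpU
    have ha : σ p.1 = p.2 := hσb p hp
    have haN : σ p.1 ≠ m.N := by rw [ha]; exact hpU.1
    have hUσ : (p.1, σ p.1) ∈ Uset m := by rw [ha, Prod.mk.eta]; exact hpU
    have hopt' := (opt_update m σ hσopt.1 p.1 hUσ).1
    exact hσopt.2 ⟨Function.update σ p.1 m.N, hopt', prec_of_useless m σ p.1 haN⟩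
  · exact ⟨σ, hσb, hσopt.1⟩
end

section
/- For every environment model m, every behavior b, every strategy σ ∈ strg(b), and every state q: V_{fix(m,b)}(σ, q) = V_m(σ, q). -/
open scoped BigOperators

variable {Q A : Type*} [Fintype Q] [DecidableEq Q] [Fintype A] [DecidableEq A]

lemma fixR_eq_of_strg {Q A : Type*} [DecidableEq Q] [DecidableEq A]
    (ω : ℝ) (σ : Q → A) :
    ∀ (steps : List (Q × A)) (r : Q → A → ℝ), (∀ p ∈ steps, σ p.1 = p.2) →
      ∀ q, fixR ω r steps q (σ q) = r q (σ q) := by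
  intro steps
  induction steps with
  | nil => intro r _ q; rfl
  | cons s rest ih =>
    intro r h q
    have := ih (fun q a => if q = s.1 ∧ a ≠ s.2 then -ω else r q a)
      (fun p hp => h p (List.mem_cons_of_mem _ hp)) q
    rw [fixR, this]
    simp only [ite_eq_right_iff]
    rintro ⟨rfl, hne⟩
    exact absurd (h s List.mem_cons_self) hne

lemma stepDist_fixMDP {Q A : Type*} [Fintype Q] [DecidableEq Q] [Fintype A] [DecidableEq A]
    (m : MDP Q A) (ω : ℝ) (b : Behavior Q A) (σ : Q → A) (i : ℕ) :
    stepDist (fixMDP m ω b) σ i = stepDist m σ i := by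
  induction i with
  | zero => rfl
  | succ n ih => funext q q'; simp only [stepDist, ih]; rfl

/-- `V_{fix(m,b)}(σ, q) = V_m(σ, q)` for every `σ ∈ strg(b)` and state `q`. -/
theorem V_fixMDP_eq_V_of_mem_strg
    {Q A : Type*} [Fintype Q] [DecidableEq Q] [Fintype A] [DecidableEq A]
    (m : EnvModel Q A) (b : Behavior Q A)
    (ω : ℝ) (hω : 2 * rstar m.toMDP / (1 - m.γ) < ω)
    (σ : Q → A) (hσ : σ ∈ strg b) (q : Q) :
    V (fixMDP m.toMDP ω b) σ q = V m.toMDP σ q := by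
  unfold V
  congr 1
  funext i
  rw [stepDist_fixMDP]
  congr 1
  apply Finset.sum_congr rfl
  intro q' _
  rw [show (fixMDP m.toMDP ω b).r = fixR ω m.r b.steps from rfl,
    fixR_eq_of_strg ω σ b.steps m.r hσ q']
end
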